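/- Let L = ∑_{i=1}^N D_{i,N}² with D_{i,N} the type-A Dunkl operators. Then for every j, e^{L/2} x_j e^{-L/2} = x_j + D_{j,N} as operators on ℂ[x_1,…,x_N], where e^{±L/2} are defined by their (locally terminating) power series since L lowers polynomial degree by 2. -/

import Mathlib

open MvPolynomial Finset Classical

/-- The variable-swap operator `σ_{ij}`. -/
noncomputable def swapOp {N : ℕ} (i j : Fin N) (p : MvPolynomial (Fin N) ℂ) :
    MvPolynomial (Fin N) ℂ :=
  rename (Equiv.swap i j) p

/-- The divided difference `(x_i - x_j)⁻¹ (1 - σ_{ij}) p`, well defined on polynomials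
since `(1 - σ_{ij})p` is divisible by `x_i - x_j`. -/
noncomputable def divDiff {N : ℕ} (i j : Fin N) (p : MvPolynomial (Fin N) ℂ) :
    MvPolynomial (Fin N) ℂ :=
  if h : (X i - X j) ∣ (p - swapOp i j p) then h.choose else 0

/-- The type-A Dunkl operator `D_{i,N} = ∂/∂x_i + θ ∑_{j ≠ i} (x_i - x_j)⁻¹ (1 - σ_{ij})`. -/
noncomputable def dunkl {N : ℕ} (θ : ℂ) (i : Fin N) (p : MvPolynomial (Fin N) ℂ) :
    MvPolynomial (Fin N) ℂ :=
  pderiv i p + θ • ∑ j ∈ Finset.univ.filter (fun j => j ≠ i), divDiff i j p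

/-- The Dunkl Laplacian `L = ∑_i D_{i,N}²`. -/
noncomputable def dunklLap {N : ℕ} (θ : ℂ) (p : MvPolynomial (Fin N) ℂ) :
    MvPolynomial (Fin N) ℂ :=
  ∑ i : Fin N, dunkl θ i (dunkl θ i p)

/-- `e^{cL/2} p`, defined by the locally terminating power series (`L` lowers degree
by 2, so the sum over `k ≤ deg p` suffices). -/
noncomputable def expHalfDunklLap {N : ℕ} (θ c : ℂ) (p : MvPolynomial (Fin N) ℂ) :
    MvPolynomial (Fin N) ℂ :=
  ∑ k ∈ Finset.range (p.totalDegree + 1),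
    (c ^ k / ((2 : ℂ) ^ k * (Nat.factorial k : ℂ))) • ((dunklLap θ)^[k] p)

namespace DunklAux

variable {N : ℕ}

abbrev P (N : ℕ) := MvPolynomial (Fin N) ℂ

lemma swapOp_add (i j : Fin N) (p q : P N) :
    swapOp i j (p + q) = swapOp i j p + swapOp i j q := map_add _ _ _

lemma swapOp_sub (i j : Fin N) (p q : P N) :
    swapOp i j (p - q) = swapOp i j p - swapOp i j q := map_sub _ _ _

lemma swapOp_mul (i j : Fin N) (p q : P N) :
    swapOp i j (p * q) = swapOp i j p * swapOp i j q := map_mul _ _ _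

lemma swapOp_smul (i j : Fin N) (c : ℂ) (p : P N) :
    swapOp i j (c • p) = c • swapOp i j p := by
  simp [swapOp]

lemma swapOp_C (i j : Fin N) (c : ℂ) : swapOp i j (C c) = C c := by simp [swapOp]

lemma swapOp_zero (i j : Fin N) : swapOp i j (0 : P N) = 0 := map_zero _

lemma swapOp_X (i j k : Fin N) : swapOp i j (X k) = X (Equiv.swap i j k) := rename_X _ _

lemma swapOp_sum {α : Type*} (i j : Fin N) (s : Finset α) (f : α → P N) :
    swapOp i j (∑ a ∈ s, f a) = ∑ a ∈ s, swapOp i j (f a) := map_sum _ _ _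

lemma swapOp_swapOp (i j : Fin N) (p : P N) : swapOp i j (swapOp i j p) = p := by
  rw [swapOp, swapOp, rename_rename]
  have : (Equiv.swap i j : Fin N → Fin N) ∘ (Equiv.swap i j) = id := by
    funext x; simp
  rw [this, rename_id, AlgHom.id_apply]

lemma swapOp_comm (i j : Fin N) (p : P N) : swapOp i j p = swapOp j i p := by
  rw [swapOp, swapOp, Equiv.swap_comm]

lemma rename_swapOp (e : Equiv.Perm (Fin N)) (i j : Fin N) (p : P N) :
    rename e (swapOp i j p) = swapOp (e i) (e j) (rename e p) := by
  rw [swapOp, swapOp, rename_rename, rename_rename]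
  have : (⇑e ∘ ⇑(Equiv.swap i j)) = (⇑(Equiv.swap (e i) (e j)) ∘ ⇑e) := by
    funext x
    simp only [Function.comp_apply, Equiv.swap_apply_def, EmbeddingLike.apply_eq_iff_eq]
    split_ifs <;> simp_all
  rw [this]

lemma sub_swap_dvd (i j : Fin N) (p : P N) :
    (X i - X j) ∣ (p - swapOp i j p) := by
  induction p using MvPolynomial.induction_on with
  | C a => simp [swapOp_C]
  | add p q hp hq =>
      have : p + q - swapOp i j (p + q) = (p - swapOp i j p) + (q - swapOp i j q) := by
        rw [swapOp_add]; ring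
      rw [this]; exact dvd_add hp hq
  | mul_X p k hp =>
      rw [swapOp_mul, swapOp_X]
      rcases eq_or_ne k i with rfl | hki
      · rw [Equiv.swap_apply_left]
        have : p * X k - swapOp k j p * X j
            = (p - swapOp k j p) * X k + swapOp k j p * (X k - X j) := by ring
        rw [this]
        exact dvd_add (Dvd.dvd.mul_right hp _) (Dvd.dvd.mul_left dvd_rfl _)
      · rcases eq_or_ne k j with rfl | hkj
        · rw [Equiv.swap_apply_right]
          have : p * X k - swapOp i k p * X i
              = (p - swapOp i k p) * X k - swapOp i k p * (X i - X k) := by ring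
          rw [this]
          exact dvd_sub (Dvd.dvd.mul_right hp _) (Dvd.dvd.mul_left dvd_rfl _)
        · rw [Equiv.swap_apply_of_ne_of_ne hki hkj]
          have : p * X k - swapOp i j p * X k = (p - swapOp i j p) * X k := by ring
          rw [this]
          exact Dvd.dvd.mul_right hp _

lemma X_sub_X_ne_zero {i j : Fin N} (h : i ≠ j) : (X i - X j : P N) ≠ 0 :=
  sub_ne_zero.mpr (fun h' => h (MvPolynomial.X_injective h'))

lemma divDiff_spec (i j : Fin N) (p : P N) :
    (X i - X j) * divDiff i j p = p - swapOp i j p := by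
  rw [divDiff, dif_pos (sub_swap_dvd i j p)]
  exact ((sub_swap_dvd i j p).choose_spec).symm

lemma divDiff_eq_of {i j : Fin N} (h : i ≠ j) {p q : P N}
    (hq : (X i - X j) * q = p - swapOp i j p) : divDiff i j p = q :=
  mul_left_cancel₀ (X_sub_X_ne_zero h) ((divDiff_spec i j p).trans hq.symm)

lemma divDiff_add {i j : Fin N} (h : i ≠ j) (p q : P N) :
    divDiff i j (p + q) = divDiff i j p + divDiff i j q := by
  refine divDiff_eq_of h ?_
  rw [mul_add, divDiff_spec, divDiff_spec, swapOp_add]; ring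

lemma divDiff_smul {i j : Fin N} (h : i ≠ j) (c : ℂ) (p : P N) :
    divDiff i j (c • p) = c • divDiff i j p := by
  refine divDiff_eq_of h ?_
  rw [swapOp_smul, mul_smul_comm, divDiff_spec, smul_sub]

lemma divDiff_C {i j : Fin N} (h : i ≠ j) (c : ℂ) : divDiff i j (C c : P N) = 0 := by
  refine divDiff_eq_of h ?_
  rw [swapOp_C]; ring

lemma divDiff_zero {i j : Fin N} (h : i ≠ j) : divDiff i j (0 : P N) = 0 := by
  refine divDiff_eq_of h ?_
  rw [swapOp_zero]; ring

lemma divDiff_X_mul_left {i j : Fin N} (h : i ≠ j) (p : P N) :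
    divDiff i j (X i * p) = X i * divDiff i j p + swapOp i j p := by
  refine divDiff_eq_of h ?_
  rw [swapOp_mul, swapOp_X, Equiv.swap_apply_left]
  linear_combination (X i : P N) * divDiff_spec i j p

lemma divDiff_X_mul_right {i j : Fin N} (h : i ≠ j) (p : P N) :
    divDiff i j (X j * p) = X j * divDiff i j p - swapOp i j p := by
  refine divDiff_eq_of h ?_
  rw [swapOp_mul, swapOp_X, Equiv.swap_apply_right]
  linear_combination (X j : P N) * divDiff_spec i j p

lemma divDiff_X_mul_other {i j k : Fin N} (h : i ≠ j) (hki : k ≠ i) (hkj : k ≠ j) (p : P N) :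
    divDiff i j (X k * p) = X k * divDiff i j p := by
  refine divDiff_eq_of h ?_
  rw [swapOp_mul, swapOp_X, Equiv.swap_apply_of_ne_of_ne hki hkj]
  linear_combination (X k : P N) * divDiff_spec i j p

lemma rename_divDiff (e : Equiv.Perm (Fin N)) {i j : Fin N} (h : i ≠ j) (p : P N) :
    rename e (divDiff i j p) = divDiff (e i) (e j) (rename e p) := by
  refine (divDiff_eq_of (fun hc => h (e.injective hc)) ?_).symm
  rw [← rename_swapOp]
  have : (X (e i) - X (e j) : P N) = rename e (X i - X j) := by simp
  rw [this, ← map_mul, divDiff_spec, map_sub]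

lemma dunkl_add (θ : ℂ) (i : Fin N) (p q : P N) :
    dunkl θ i (p + q) = dunkl θ i p + dunkl θ i q := by
  unfold dunkl
  rw [map_add]
  have : ∀ j ∈ Finset.univ.filter (fun j => j ≠ i), divDiff i j (p + q)
      = divDiff i j p + divDiff i j q := by
    intro j hj
    exact divDiff_add (Finset.mem_filter.mp hj).2.symm p q
  rw [Finset.sum_congr rfl this, Finset.sum_add_distrib, smul_add]
  ring

lemma dunkl_smul (θ : ℂ) (i : Fin N) (c : ℂ) (p : P N) :
    dunkl θ i (c • p) = c • dunkl θ i p := by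
  unfold dunkl
  rw [(pderiv i).map_smul]
  have : ∀ j ∈ Finset.univ.filter (fun j => j ≠ i), divDiff i j (c • p)
      = c • divDiff i j p := by
    intro j hj
    exact divDiff_smul (Finset.mem_filter.mp hj).2.symm c p
  rw [Finset.sum_congr rfl this, ← Finset.smul_sum, smul_add, smul_comm]

lemma dunkl_neg (θ : ℂ) (i : Fin N) (p : P N) : dunkl θ i (-p) = -dunkl θ i p := by
  have := dunkl_smul θ i (-1) p
  simpa using this

lemma dunkl_sub (θ : ℂ) (i : Fin N) (p q : P N) :
    dunkl θ i (p - q) = dunkl θ i p - dunkl θ i q := by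
  rw [sub_eq_add_neg, dunkl_add, dunkl_neg, sub_eq_add_neg]

lemma dunkl_C (θ : ℂ) (i : Fin N) (c : ℂ) : dunkl θ i (C c : P N) = 0 := by
  unfold dunkl
  have : ∀ j ∈ Finset.univ.filter (fun j => j ≠ i), divDiff i j (C c : P N) = 0 := by
    intro j hj
    exact divDiff_C (Finset.mem_filter.mp hj).2.symm c
  rw [Finset.sum_congr rfl this]
  simp

lemma dunkl_zero (θ : ℂ) (i : Fin N) : dunkl θ i (0 : P N) = 0 := by
  have := dunkl_C θ i 0
  simpa using this

lemma dunkl_sum {α : Type*} (θ : ℂ) (i : Fin N) (s : Finset α) (f : α → P N) :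
    dunkl θ i (∑ a ∈ s, f a) = ∑ a ∈ s, dunkl θ i (f a) := by
  classical
  induction s using Finset.induction_on with
  | empty => simpa using dunkl_zero θ i
  | insert _ _ h ih => rw [Finset.sum_insert h, Finset.sum_insert h, dunkl_add, ih]

lemma rename_dunkl (e : Equiv.Perm (Fin N)) (θ : ℂ) (i : Fin N) (p : P N) :
    rename e (dunkl θ i p) = dunkl θ (e i) (rename e p) := by
  unfold dunkl
  rw [map_add, pderiv_rename e.injective, map_smul, map_sum]
  congr 2
  refine Finset.sum_nbij' (fun j => e j) (fun j => e.symm j) ?_ ?_ ?_ ?_ ?_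
  · intro a ha
    simp only [Finset.mem_filter, Finset.mem_univ, true_and] at ha ⊢
    exact fun hc => ha (e.injective hc)
  · intro a ha
    simp only [Finset.mem_filter, Finset.mem_univ, true_and] at ha ⊢
    intro hc
    exact ha (by rw [← hc]; simp)
  · intro a _; simp
  · intro a _; simp
  · intro a ha
    simp only [Finset.mem_filter, Finset.mem_univ, true_and] at ha
    exact rename_divDiff e (Ne.symm ha) p

lemma swapOp_dunkl (a b : Fin N) (θ : ℂ) (i : Fin N) (p : P N) :
    swapOp a b (dunkl θ i p) = dunkl θ (Equiv.swap a b i) (swapOp a b p) :=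
  rename_dunkl (Equiv.swap a b) θ i p

/-- `D_i (σ_{im} p) = σ_{im} (D_m p)`. -/
lemma dunkl_swapOp_left (θ : ℂ) {i m : Fin N} (h : m ≠ i) (p : P N) :
    dunkl θ i (swapOp i m p) = swapOp i m (dunkl θ m p) := by
  rw [swapOp_dunkl i m θ m p, Equiv.swap_apply_right]

/-- for `a ∉ {i, m}`: `D_a (σ_{im} p) = σ_{im} (D_a p)`. -/
lemma dunkl_swapOp_other (θ : ℂ) {i m a : Fin N} (hai : a ≠ i) (ham : a ≠ m) (p : P N) :
    dunkl θ a (swapOp i m p) = swapOp i m (dunkl θ a p) := by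
  rw [swapOp_dunkl i m θ a p, Equiv.swap_apply_of_ne_of_ne hai ham]

/-- `D_i (x_i p) = x_i D_i p + p + θ ∑_{k ≠ i} σ_{ik} p`. -/
lemma dunkl_X_mul_self (θ : ℂ) (i : Fin N) (p : P N) :
    dunkl θ i (X i * p) = X i * dunkl θ i p + p
      + θ • ∑ k ∈ Finset.univ.filter (fun k => k ≠ i), swapOp i k p := by
  unfold dunkl
  have hd : pderiv i (X i * p) = p + X i * pderiv i p := by
    rw [pderiv_mul]; simp
  rw [hd]
  have : ∀ k ∈ Finset.univ.filter (fun k => k ≠ i), divDiff i k (X i * p)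
      = X i * divDiff i k p + swapOp i k p := by
    intro k hk
    exact divDiff_X_mul_left (Finset.mem_filter.mp hk).2.symm p
  rw [Finset.sum_congr rfl this, Finset.sum_add_distrib, ← Finset.mul_sum]
  simp only [smul_eq_C_mul]
  ring

/-- for `j ≠ i`: `D_i (x_j p) = x_j D_i p - θ σ_{ij} p`. -/
lemma dunkl_X_mul_ne (θ : ℂ) {i j : Fin N} (hij : i ≠ j) (p : P N) :
    dunkl θ i (X j * p) = X j * dunkl θ i p - θ • swapOp i j p := by
  unfold dunkl
  have hd : pderiv i (X j * p) = X j * pderiv i p := by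
    rw [pderiv_mul]
    simp [pderiv_X, Pi.single_apply, hij.symm]
  rw [hd]
  have : ∀ k ∈ Finset.univ.filter (fun k => k ≠ i), divDiff i k (X j * p)
      = X j * divDiff i k p - (if k = j then swapOp i j p else 0) := by
    intro k hk
    have hki : k ≠ i := (Finset.mem_filter.mp hk).2
    rcases eq_or_ne k j with rfl | hkj
    · rw [if_pos rfl, divDiff_X_mul_right hij p]
    · rw [if_neg hkj, divDiff_X_mul_other hki.symm hij.symm hkj.symm p, sub_zero]
  rw [Finset.sum_congr rfl this, Finset.sum_sub_distrib, ← Finset.mul_sum,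
    Finset.sum_ite_eq' (Finset.univ.filter (fun k => k ≠ i)) j (fun _ => swapOp i j p),
    if_pos (by simp [hij.symm])]
  simp only [smul_eq_C_mul]
  ring

lemma dunklLap_add (θ : ℂ) (p q : P N) :
    dunklLap θ (p + q) = dunklLap θ p + dunklLap θ q := by
  unfold dunklLap
  rw [← Finset.sum_add_distrib]
  exact Finset.sum_congr rfl fun i _ => by rw [dunkl_add, dunkl_add]

lemma dunklLap_smul (θ : ℂ) (c : ℂ) (p : P N) :
    dunklLap θ (c • p) = c • dunklLap θ p := by
  unfold dunklLap
  rw [Finset.smul_sum]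
  exact Finset.sum_congr rfl fun i _ => by rw [dunkl_smul, dunkl_smul]

lemma dunklLap_zero (θ : ℂ) : dunklLap θ (0 : P N) = 0 := by
  unfold dunklLap
  simp [dunkl_zero]

/-- The key commutator identity `[L, x_j] = 2 D_j`. -/
lemma dunklLap_X_mul (θ : ℂ) (j : Fin N) (p : P N) :
    dunklLap θ (X j * p) = X j * dunklLap θ p + (2 : ℂ) • dunkl θ j p := by
  unfold dunklLap
  have key : ∀ i : Fin N, dunkl θ i (dunkl θ i (X j * p))
      = X j * dunkl θ i (dunkl θ i p)
        + (if i = j then (2 : ℂ) • dunkl θ j p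
            + θ • ∑ k ∈ Finset.univ.filter (fun k => k ≠ j), swapOp j k (dunkl θ j p)
            + θ • ∑ k ∈ Finset.univ.filter (fun k => k ≠ j), swapOp j k (dunkl θ k p)
          else -(θ • swapOp i j (dunkl θ i p)) - θ • swapOp i j (dunkl θ j p)) := by
    intro i
    rcases eq_or_ne i j with rfl | hij
    · rw [if_pos rfl]
      rw [dunkl_X_mul_self θ i p, dunkl_add, dunkl_add, dunkl_X_mul_self θ i _,
        dunkl_smul, dunkl_sum]
      have : ∀ k ∈ Finset.univ.filter (fun k => k ≠ i), dunkl θ i (swapOp i k p)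
          = swapOp i k (dunkl θ k p) := by
        intro k hk
        exact dunkl_swapOp_left θ (Finset.mem_filter.mp hk).2 p
      rw [Finset.sum_congr rfl this]
      simp only [smul_eq_C_mul, map_ofNat]
      ring
    · rw [if_neg hij]
      rw [dunkl_X_mul_ne θ hij p, dunkl_sub θ i _ _, dunkl_X_mul_ne θ hij _, dunkl_smul]
      have : dunkl θ i (swapOp i j p) = swapOp i j (dunkl θ j p) :=
        dunkl_swapOp_left θ (Ne.symm hij) p
      rw [this]
      simp only [smul_eq_C_mul, map_ofNat]
      ring
  rw [Finset.sum_congr rfl (fun i _ => key i), Finset.sum_add_distrib, ← Finset.mul_sum]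
  congr 1
  rw [← Finset.add_sum_erase Finset.univ _ (Finset.mem_univ j), if_pos rfl]
  have herase : Finset.univ.erase j = Finset.univ.filter (fun k => k ≠ j) := by
    rw [Finset.filter_ne']
  have : ∀ i ∈ Finset.univ.erase j,
      (if i = j then (2 : ℂ) • dunkl θ j p
            + θ • ∑ k ∈ Finset.univ.filter (fun k => k ≠ j), swapOp j k (dunkl θ j p)
            + θ • ∑ k ∈ Finset.univ.filter (fun k => k ≠ j), swapOp j k (dunkl θ k p)
          else -(θ • swapOp i j (dunkl θ i p)) - θ • swapOp i j (dunkl θ j p))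
      = -(θ • swapOp j i (dunkl θ i p)) - θ • swapOp j i (dunkl θ j p) := by
    intro i hi
    rw [if_neg (Finset.ne_of_mem_erase hi), swapOp_comm i j, swapOp_comm i j]
  rw [Finset.sum_congr rfl this, herase]
  rw [Finset.sum_sub_distrib, Finset.sum_neg_distrib, ← Finset.smul_sum, ← Finset.smul_sum]
  abel

lemma comm_step_eq (θ : ℂ) {a b : Fin N} (hab : a ≠ b) (p : P N)
    (IH : dunkl θ a (dunkl θ b p) = dunkl θ b (dunkl θ a p)) :
    dunkl θ a (dunkl θ b (X a * p)) = dunkl θ b (dunkl θ a (X a * p)) := by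
  rw [dunkl_X_mul_ne θ hab.symm p, dunkl_sub θ a _ _, dunkl_X_mul_self θ a _,
    dunkl_smul, swapOp_comm b a, dunkl_swapOp_left θ hab.symm p]
  rw [dunkl_X_mul_self θ a p, dunkl_add, dunkl_add, dunkl_X_mul_ne θ hab.symm _,
    dunkl_smul, dunkl_sum]
  have hsum : ∀ k ∈ Finset.univ.filter (fun k => k ≠ a), dunkl θ b (swapOp a k p)
      = swapOp a k (dunkl θ b p)
        + (if k = b then swapOp a b (dunkl θ a p) - swapOp a b (dunkl θ b p) else 0) := by
    intro k hk
    have hka : k ≠ a := (Finset.mem_filter.mp hk).2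
    rcases eq_or_ne k b with rfl | hkb
    · rw [if_pos rfl, swapOp_comm a k, dunkl_swapOp_left θ hka.symm p, swapOp_comm k a]
      ring
    · rw [if_neg hkb, dunkl_swapOp_other θ hab.symm hkb.symm p, add_zero]
  rw [Finset.sum_congr rfl hsum, Finset.sum_add_distrib,
    Finset.sum_ite_eq' (Finset.univ.filter (fun k => k ≠ a)) b
      (fun _ => swapOp a b (dunkl θ a p) - swapOp a b (dunkl θ b p)),
    if_pos (by simp [hab.symm]), swapOp_comm b a, IH]
  simp only [smul_eq_C_mul]
  ring

lemma comm_step_ne (θ : ℂ) {a b k : Fin N} (hab : a ≠ b) (hka : k ≠ a) (hkb : k ≠ b)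
    (p : P N)
    (IH : dunkl θ a (dunkl θ b p) = dunkl θ b (dunkl θ a p)) :
    dunkl θ a (dunkl θ b (X k * p)) = dunkl θ b (dunkl θ a (X k * p)) := by
  rw [dunkl_X_mul_ne θ hkb.symm p, dunkl_sub θ a _ _, dunkl_X_mul_ne θ hka.symm _,
    dunkl_smul, dunkl_swapOp_other θ hab hka.symm p]
  rw [dunkl_X_mul_ne θ hka.symm p, dunkl_sub θ b _ _, dunkl_X_mul_ne θ hkb.symm _,
    dunkl_smul, dunkl_swapOp_other θ hab.symm hkb.symm p, IH]
  simp only [smul_eq_C_mul]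
  ring

lemma dunkl_comm (θ : ℂ) (a b : Fin N) (p : P N) :
    dunkl θ a (dunkl θ b p) = dunkl θ b (dunkl θ a p) := by
  rcases eq_or_ne a b with rfl | hab
  · rfl
  induction p using MvPolynomial.induction_on with
  | C c => rw [dunkl_C, dunkl_C, dunkl_zero, dunkl_zero]
  | add p q hp hq =>
      rw [dunkl_add, dunkl_add, dunkl_add, dunkl_add, hp, hq]
  | mul_X p k hp =>
      rw [mul_comm]
      rcases eq_or_ne k a with rfl | hka
      · exact comm_step_eq θ hab p hp
      rcases eq_or_ne k b with rfl | hkb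
      · exact (comm_step_eq θ hab.symm p hp.symm).symm
      · exact comm_step_ne θ hab hka hkb p hp

lemma dunklLap_dunkl_comm (θ : ℂ) (j : Fin N) (p : P N) :
    dunklLap θ (dunkl θ j p) = dunkl θ j (dunklLap θ p) := by
  unfold dunklLap
  rw [dunkl_sum]
  refine Finset.sum_congr rfl fun i _ => ?_
  rw [dunkl_comm θ i j p, dunkl_comm θ i j (dunkl θ i p)]

lemma finsupp_sum_sub_single {m : Fin N →₀ ℕ} {i : Fin N} (h : 0 < m i) :
    ((m - Finsupp.single i 1).sum fun _ e => e) + 1 = m.sum fun _ e => e := by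
  have hle : Finsupp.single i 1 ≤ m := by
    rwa [Finsupp.single_le_iff]
  have h2 : ((m - Finsupp.single i 1) + Finsupp.single i 1).sum (fun _ e => (e : ℕ))
      = ((m - Finsupp.single i 1).sum fun _ e => e)
        + ((Finsupp.single i 1).sum fun _ e => e) :=
    Finsupp.sum_add_index (by simp) (by simp)
  rw [tsub_add_cancel_of_le hle] at h2
  rw [h2, Finsupp.sum_single_index rfl]

lemma totalDegree_swapOp (i j : Fin N) (p : P N) :
    (swapOp i j p).totalDegree = p.totalDegree := by
  refine le_antisymm (totalDegree_rename_le _ _) ?_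
  conv_lhs => rw [← swapOp_swapOp i j p]
  exact totalDegree_rename_le _ _

lemma totalDegree_pderiv_le {n : ℕ} (i : Fin N) {p : P N} (hp : p.totalDegree ≤ n + 1) :
    (pderiv i p).totalDegree ≤ n := by
  conv_lhs => rw [p.as_sum, map_sum]
  refine totalDegree_finsetSum_le fun m hm => ?_
  rw [pderiv_monomial]
  rcases Nat.eq_zero_or_pos (m i) with h0 | hpos
  · rw [h0]
    simp
  · refine (totalDegree_monomial_le _ _).trans ?_
    simp only [Function.id_def]
    have hms : (m.sum fun _ e => e) ≤ n + 1 := le_trans (le_totalDegree hm) hp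
    have := finsupp_sum_sub_single hpos
    omega

lemma totalDegree_divDiff_le {n : ℕ} {i j : Fin N} (h : i ≠ j) {p : P N}
    (hp : p.totalDegree ≤ n + 1) : (divDiff i j p).totalDegree ≤ n := by
  by_contra hlt
  push_neg at hlt
  have hq : divDiff i j p ≠ 0 := by
    intro h0
    rw [h0] at hlt
    simp at hlt
  -- find a coefficient of (X i - X j) * divDiff of degree > n + 1
  set q := divDiff i j p with hqdef
  set d := q.totalDegree with hd
  have hdn : n + 1 ≤ d := hlt
  -- choose m in support of q with m.sum = d maximizing m i
  have hsupp : (q.support.filter (fun m => (m.sum fun _ e => e) = d)).Nonempty := by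
    obtain ⟨m, hm, hms⟩ := Finset.exists_mem_eq_sup q.support
      (MvPolynomial.support_nonempty.mpr hq) (fun m => m.sum fun _ e => e)
    exact ⟨m, Finset.mem_filter.mpr ⟨hm, hms.symm⟩⟩
  obtain ⟨m, hm, hmax⟩ := Finset.exists_max_image _ (fun m => m i) hsupp
  have hmq : m ∈ q.support := (Finset.mem_filter.mp hm).1
  have hmd : (m.sum fun _ e => e) = d := (Finset.mem_filter.mp hm).2
  -- the coefficient of m + e_i in (X i - X j) * q equals coeff m q ≠ 0
  set μ : (Fin N) →₀ ℕ := m + Finsupp.single i 1 with hμ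
  have hcoeff : coeff μ ((X i - X j) * q) = coeff m q := by
    rw [sub_mul, coeff_sub]
    have h1 : coeff μ (X i * q) = coeff m q := by
      rw [hμ, add_comm m (Finsupp.single i 1), coeff_X_mul]
    have h2 : coeff μ (X j * q) = 0 := by
      rw [coeff_X_mul']
      split_ifs with hmem
      · -- μ - e_j would be a support elt of sum d with i-coord m i + 1
        by_contra hne
        have hin : (μ - Finsupp.single j 1) ∈ q.support := by
          rw [MvPolynomial.mem_support_iff]; exact hne
        have hμj : 0 < μ j := by
          have := Finsupp.mem_support_iff.mp hmem
          omega
        have hμsum : (μ.sum fun _ e => e) = d + 1 := by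
          rw [hμ, Finsupp.sum_add_index (by simp) (by simp)]
          rw [Finsupp.sum_single_index rfl, hmd]
        have hsum : ((μ - Finsupp.single j 1).sum fun _ e => e) = d := by
          have := finsupp_sum_sub_single hμj
          omega
        have hii : ((μ - Finsupp.single j 1 : (Fin N) →₀ ℕ)) i = m i + 1 := by
          rw [Finsupp.tsub_apply, hμ, Finsupp.add_apply, Finsupp.single_apply,
            Finsupp.single_apply]
          simp [Ne.symm h]
        have := hmax _ (Finset.mem_filter.mpr ⟨hin, hsum⟩)
        omega
      · rfl
    rw [h1, h2, sub_zero]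
  have hco : coeff μ ((X i - X j) * q) ≠ 0 := by
    rw [hcoeff]; exact MvPolynomial.mem_support_iff.mp hmq
  have hle : (μ.sum fun _ e => e) ≤ ((X i - X j) * q).totalDegree :=
    le_totalDegree (MvPolynomial.mem_support_iff.mpr hco)
  rw [divDiff_spec] at hle
  have hμsum : (μ.sum fun _ e => e) = d + 1 := by
    rw [hμ, Finsupp.sum_add_index (by simp) (by simp)]
    rw [Finsupp.sum_single_index rfl, hmd]
  have hdegsub : (p - swapOp i j p).totalDegree ≤ n + 1 := by
    refine (totalDegree_sub p (swapOp i j p)).trans ?_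
    rw [totalDegree_swapOp]
    simp [hp]
  omega

lemma eq_C_of_totalDegree_zero {q : P N} (h : q.totalDegree = 0) : q = C (coeff 0 q) := by
  ext m
  rcases eq_or_ne m 0 with rfl | hm
  · simp
  · rw [coeff_C, if_neg (Ne.symm hm)]
    by_contra hc
    have hms : m ∈ q.support := MvPolynomial.mem_support_iff.mpr hc
    have := (totalDegree_eq_zero_iff _ q).mp h m hms
    exact hm (Finsupp.ext this)

lemma totalDegree_dunkl_le {n : ℕ} (θ : ℂ) (i : Fin N) {p : P N}
    (hp : p.totalDegree ≤ n + 1) : (dunkl θ i p).totalDegree ≤ n := by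
  unfold dunkl
  refine (totalDegree_add _ _).trans (max_le (totalDegree_pderiv_le i hp) ?_)
  refine (totalDegree_smul_le θ _).trans ?_
  refine totalDegree_finsetSum_le fun k hk => ?_
  exact totalDegree_divDiff_le (Ne.symm (Finset.mem_filter.mp hk).2) hp

lemma dunkl_eq_zero_of_deg_zero (θ : ℂ) (i : Fin N) {p : P N}
    (hp : p.totalDegree = 0) : dunkl θ i p = 0 := by
  rw [eq_C_of_totalDegree_zero hp, dunkl_C]

lemma dunklLap_eq_zero_of_deg_le_one (θ : ℂ) {p : P N} (hp : p.totalDegree ≤ 1) :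
    dunklLap θ p = 0 := by
  unfold dunklLap
  refine Finset.sum_eq_zero fun i _ => ?_
  have h0 : (dunkl θ i p).totalDegree ≤ 0 := totalDegree_dunkl_le θ i hp
  exact dunkl_eq_zero_of_deg_zero θ i (Nat.le_zero.mp h0)

lemma totalDegree_dunklLap_le {n : ℕ} (θ : ℂ) {p : P N}
    (hp : p.totalDegree ≤ n + 2) : (dunklLap θ p).totalDegree ≤ n := by
  unfold dunklLap
  refine totalDegree_finsetSum_le fun i _ => ?_
  exact totalDegree_dunkl_le θ i (totalDegree_dunkl_le θ i hp)

lemma totalDegree_dunklLap_le_self (θ : ℂ) (p : P N) :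
    (dunklLap θ p).totalDegree ≤ p.totalDegree := by
  rcases le_or_gt p.totalDegree 1 with h | h
  · rw [dunklLap_eq_zero_of_deg_le_one θ h]
    simp
  · have h2 : p.totalDegree ≤ (p.totalDegree - 2) + 2 := by omega
    exact (totalDegree_dunklLap_le θ h2).trans (by omega)

lemma totalDegree_dunklLap_iterate_le (θ : ℂ) (k : ℕ) (p : P N) :
    ((dunklLap θ)^[k] p).totalDegree ≤ p.totalDegree := by
  induction k with
  | zero => simp
  | succ k ih =>
      rw [Function.iterate_succ_apply']
      exact (totalDegree_dunklLap_le_self θ _).trans ih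

lemma dunklLap_iterate_zero (θ : ℂ) (k : ℕ) : (dunklLap θ)^[k] (0 : P N) = 0 :=
  Function.iterate_fixed (dunklLap_zero θ) k

lemma dunklLap_iterate_vanish (θ : ℂ) {k : ℕ} {p : P N} (h : p.totalDegree < 2 * k) :
    (dunklLap θ)^[k] p = 0 := by
  induction k generalizing p with
  | zero => omega
  | succ k ih =>
      rw [Function.iterate_succ_apply]
      rcases le_or_gt p.totalDegree 1 with h1 | h1
      · rw [dunklLap_eq_zero_of_deg_le_one θ h1, dunklLap_iterate_zero]
      · have h2 : p.totalDegree ≤ (p.totalDegree - 2) + 2 := by omega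
        refine ih ?_
        have := totalDegree_dunklLap_le θ h2
        omega

lemma coeff_rec (k : ℕ) :
    ((1:ℂ) ^ (k+1) / ((2:ℂ) ^ (k+1) * (Nat.factorial (k+1) : ℂ))) * (2 * (k+1) : ℂ)
      = (1:ℂ) ^ k / ((2:ℂ) ^ k * (Nat.factorial k : ℂ)) := by
  have hf : (Nat.factorial (k+1) : ℂ) = (k+1) * (Nat.factorial k : ℂ) := by
    push_cast [Nat.factorial_succ]
    ring
  have hfk : (Nat.factorial k : ℂ) ≠ 0 := Nat.cast_ne_zero.mpr (Nat.factorial_ne_zero k)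
  have hk1 : ((k:ℂ) + 1) ≠ 0 := Nat.cast_add_one_ne_zero k
  rw [hf, one_pow, one_pow]
  field_simp
  ring

lemma comp_coeff (m : ℕ) :
    (∑ kl ∈ Finset.HasAntidiagonal.antidiagonal m,
      ((1:ℂ) ^ kl.1 / ((2:ℂ) ^ kl.1 * (Nat.factorial kl.1 : ℂ)))
        * ((-1:ℂ) ^ kl.2 / ((2:ℂ) ^ kl.2 * (Nat.factorial kl.2 : ℂ))))
      = if m = 0 then 1 else 0 := by
  rw [Finset.Nat.sum_antidiagonal_eq_sum_range_succ_mk]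
  have hterm : ∀ k ∈ Finset.range (m+1),
      ((1:ℂ) ^ k / ((2:ℂ) ^ k * (Nat.factorial k : ℂ)))
        * ((-1:ℂ) ^ (m-k) / ((2:ℂ) ^ (m-k) * (Nat.factorial (m-k) : ℂ)))
      = ((-1:ℂ) ^ m / ((2:ℂ) ^ m * (Nat.factorial m : ℂ)))
          * ((-1:ℂ) ^ k * (m.choose k : ℂ)) := by
    intro k hk
    have hkm : k ≤ m := by
      have := Finset.mem_range.mp hk
      omega
    have hchoose : ((m.choose k : ℕ) : ℂ) * (Nat.factorial k : ℂ) * (Nat.factorial (m-k) : ℂ)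
        = (Nat.factorial m : ℂ) := by
      exact_mod_cast congrArg (Nat.cast : ℕ → ℂ)
        (Nat.choose_mul_factorial_mul_factorial hkm)
    have hs : ((-1:ℂ)) ^ (m-k) * ((-1:ℂ)) ^ k = (-1:ℂ) ^ m := by
      rw [← pow_add]
      congr 1
      omega
    have h2 : (2:ℂ) ^ k * (2:ℂ) ^ (m-k) = (2:ℂ) ^ m := by
      rw [← pow_add]
      congr 1
      omega
    have hfk : (Nat.factorial k : ℂ) ≠ 0 := Nat.cast_ne_zero.mpr (Nat.factorial_ne_zero k)
    have hfmk : (Nat.factorial (m-k) : ℂ) ≠ 0 := Nat.cast_ne_zero.mpr (Nat.factorial_ne_zero _)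
    have hfm : (Nat.factorial m : ℂ) ≠ 0 := Nat.cast_ne_zero.mpr (Nat.factorial_ne_zero m)
    have hsq : ((-1:ℂ)) ^ k * ((-1:ℂ)) ^ k = 1 := by
      rw [← pow_add, ← two_mul, pow_mul]
      norm_num
    have hs2 : ((-1:ℂ)) ^ (m-k) = (-1:ℂ) ^ m * (-1:ℂ) ^ k := by
      rw [← hs, mul_assoc, hsq, mul_one]
    have hC : ((m.choose k : ℕ) : ℂ) ≠ 0 :=
      Nat.cast_ne_zero.mpr (Nat.pos_iff_ne_zero.mp (Nat.choose_pos hkm))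
    rw [one_pow, hs2, ← h2, ← hchoose]
    field_simp
  rw [Finset.sum_congr rfl hterm, ← Finset.mul_sum]
  have hint := Int.alternating_sum_range_choose (n := m)
  have hc : (∑ k ∈ Finset.range (m+1), ((-1:ℂ)) ^ k * (m.choose k : ℂ))
      = if m = 0 then 1 else 0 := by
    have := congrArg (fun t : ℤ => (t : ℂ)) hint
    push_cast at this
    rw [this]
  rw [hc]
  rcases eq_or_ne m 0 with rfl | hm
  · simp
  · rw [if_neg hm, mul_zero]

lemma iterate_add (θ : ℂ) (k : ℕ) (p q : P N) :
    (dunklLap θ)^[k] (p + q) = (dunklLap θ)^[k] p + (dunklLap θ)^[k] q := by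
  induction k generalizing p q with
  | zero => rfl
  | succ k ih =>
      simp only [Function.iterate_succ_apply]
      rw [dunklLap_add, ih]

lemma iterate_smul (θ : ℂ) (k : ℕ) (c : ℂ) (p : P N) :
    (dunklLap θ)^[k] (c • p) = c • (dunklLap θ)^[k] p := by
  induction k generalizing p with
  | zero => rfl
  | succ k ih =>
      simp only [Function.iterate_succ_apply]
      rw [dunklLap_smul, ih]

lemma iterate_sum {α : Type*} (θ : ℂ) (k : ℕ) (s : Finset α) (f : α → P N) :
    (dunklLap θ)^[k] (∑ a ∈ s, f a) = ∑ a ∈ s, (dunklLap θ)^[k] (f a) := by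
  classical
  induction s using Finset.induction_on with
  | empty => simpa using dunklLap_iterate_zero θ k
  | insert _ _ h ih => rw [Finset.sum_insert h, Finset.sum_insert h, iterate_add, ih]

lemma expHalfDunklLap_eq (θ c : ℂ) (p : P N) {n : ℕ} (hn : p.totalDegree + 1 ≤ n) :
    expHalfDunklLap θ c p = ∑ k ∈ Finset.range n,
      (c ^ k / ((2 : ℂ) ^ k * (Nat.factorial k : ℂ))) • ((dunklLap θ)^[k] p) := by
  refine Finset.sum_subset (Finset.range_subset_range.mpr hn) fun k _ hk => ?_
  have hk' : p.totalDegree + 1 ≤ k := by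
    rw [Finset.mem_range] at hk; omega
  rw [dunklLap_iterate_vanish θ (by omega), smul_zero]

lemma totalDegree_expHalfDunklLap_le (θ c : ℂ) (p : P N) : (expHalfDunklLap θ c p).totalDegree ≤ p.totalDegree := by
  refine totalDegree_finsetSum_le fun k _ => ?_
  exact (totalDegree_smul_le _ _).trans (totalDegree_dunklLap_iterate_le θ k p)

lemma iterate_X_mul (θ : ℂ) (j : Fin N) (q : P N) (k : ℕ) :
    (dunklLap θ)^[k+1] (X j * q)
      = X j * (dunklLap θ)^[k+1] q
        + ((2 * (k+1) : ℕ) : ℂ) • dunkl θ j ((dunklLap θ)^[k] q) := by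
  induction k with
  | zero =>
      simp only [zero_add, Function.iterate_one, Function.iterate_zero, id_eq]
      rw [dunklLap_X_mul]
      norm_num
  | succ k ih =>
      rw [Function.iterate_succ_apply', ih, dunklLap_add, dunklLap_X_mul, dunklLap_smul,
        dunklLap_dunkl_comm, ← Function.iterate_succ_apply' (dunklLap θ) (k+1) q,
        ← Function.iterate_succ_apply' (dunklLap θ) k q]
      have hcast : ((2 * (k+1+1) : ℕ) : ℂ) = (2:ℂ) + ((2 * (k+1) : ℕ) : ℂ) := by
        push_cast
        ring
      rw [hcast, add_smul]
      abel

lemma expHalfDunklLap_X_mul (θ : ℂ) (j : Fin N) (q : P N) :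
    expHalfDunklLap θ 1 (X j * q) = X j * expHalfDunklLap θ 1 q + dunkl θ j (expHalfDunklLap θ 1 q) := by
  set d := q.totalDegree with hd
  have hdeg : (X j * q).totalDegree + 1 ≤ d + 2 := by
    have h1 : (X j * q).totalDegree ≤ (X j : P N).totalDegree + q.totalDegree :=
      totalDegree_mul _ _
    have h2 : (X j : P N).totalDegree = 1 := totalDegree_X j
    omega
  rw [expHalfDunklLap_eq θ 1 (X j * q) hdeg, Finset.sum_range_succ']
  have hstep : ∀ k,
      ((1:ℂ) ^ (k+1) / ((2 : ℂ) ^ (k+1) * (Nat.factorial (k+1) : ℂ)))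
          • ((dunklLap θ)^[k+1] (X j * q))
      = X j * (((1:ℂ) ^ (k+1) / ((2 : ℂ) ^ (k+1) * (Nat.factorial (k+1) : ℂ)))
            • ((dunklLap θ)^[k+1] q))
        + dunkl θ j (((1:ℂ) ^ k / ((2 : ℂ) ^ k * (Nat.factorial k : ℂ)))
            • ((dunklLap θ)^[k] q)) := by
    intro k
    rw [iterate_X_mul, smul_add, smul_smul, mul_smul_comm, dunkl_smul]
    congr 2
    push_cast
    exact coeff_rec k
  rw [Finset.sum_congr rfl (fun k _ => hstep k), Finset.sum_add_distrib]
  have hcoeff0 : ((1:ℂ) ^ 0 / ((2 : ℂ) ^ 0 * (Nat.factorial 0 : ℂ))) = 1 := by norm_num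
  rw [Function.iterate_zero, id_eq, hcoeff0, one_smul]
  have hfirst : (∑ k ∈ Finset.range (d+1),
        X j * (((1:ℂ) ^ (k+1) / ((2 : ℂ) ^ (k+1) * (Nat.factorial (k+1) : ℂ)))
          • ((dunklLap θ)^[k+1] q))) + X j * q
      = X j * expHalfDunklLap θ 1 q := by
    rw [← Finset.mul_sum, ← mul_add]
    congr 1
    conv_rhs => rw [expHalfDunklLap_eq θ 1 q (n := d + 2) (by omega), Finset.sum_range_succ']
    rw [Function.iterate_zero, id_eq, hcoeff0, one_smul]
  have hsecond : (∑ k ∈ Finset.range (d+1),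
        dunkl θ j (((1:ℂ) ^ k / ((2 : ℂ) ^ k * (Nat.factorial k : ℂ)))
          • ((dunklLap θ)^[k] q)))
      = dunkl θ j (expHalfDunklLap θ 1 q) := by
    rw [← dunkl_sum]
    rfl
  rw [add_right_comm, hfirst, hsecond]

lemma expHalfDunklLap_comp (θ : ℂ) (p : P N) : expHalfDunklLap θ 1 (expHalfDunklLap θ (-1) p) = p := by
  set n := p.totalDegree + 1 with hn
  have h1 : (expHalfDunklLap θ (-1) p).totalDegree + 1 ≤ n := by
    have := totalDegree_expHalfDunklLap_le θ (-1) p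
    omega
  rw [expHalfDunklLap_eq θ 1 _ h1]
  have h2 : ∀ k : ℕ, (dunklLap θ)^[k] (expHalfDunklLap θ (-1) p)
      = ∑ l ∈ Finset.range n,
          ((-1:ℂ) ^ l / ((2 : ℂ) ^ l * (Nat.factorial l : ℂ))) • ((dunklLap θ)^[k+l] p) := by
    intro k
    rw [expHalfDunklLap_eq θ (-1) p (le_of_eq hn.symm), iterate_sum]
    refine Finset.sum_congr rfl fun l _ => ?_
    rw [iterate_smul, ← Function.iterate_add_apply]
  simp only [h2, Finset.smul_sum, smul_smul]
  rw [← Finset.sum_product']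
  classical
  set T := (Finset.range n).biUnion (fun m => Finset.HasAntidiagonal.antidiagonal m) with hT
  have hsub : T ⊆ (Finset.range n) ×ˢ (Finset.range n) := by
    intro kl hkl
    rw [hT, Finset.mem_biUnion] at hkl
    obtain ⟨m, hm, hklm⟩ := hkl
    rw [Finset.HasAntidiagonal.mem_antidiagonal] at hklm
    rw [Finset.mem_range] at hm
    rw [Finset.mem_product, Finset.mem_range, Finset.mem_range]
    omega
  have hvanish : ∀ kl ∈ (Finset.range n) ×ˢ (Finset.range n), kl ∉ T →
      ((1:ℂ) ^ kl.1 / ((2:ℂ) ^ kl.1 * (Nat.factorial kl.1 : ℂ))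
        * ((-1:ℂ) ^ kl.2 / ((2:ℂ) ^ kl.2 * (Nat.factorial kl.2 : ℂ))))
          • ((dunklLap θ)^[kl.1 + kl.2] p) = 0 := by
    intro kl _ hklT
    have hge : n ≤ kl.1 + kl.2 := by
      by_contra hlt
      push_neg at hlt
      exact hklT (Finset.mem_biUnion.mpr ⟨kl.1 + kl.2, Finset.mem_range.mpr hlt,
        Finset.HasAntidiagonal.mem_antidiagonal.mpr rfl⟩)
    rw [dunklLap_iterate_vanish θ (by omega), smul_zero]
  rw [← Finset.sum_subset hsub hvanish]
  have hdisj : ∀ a ∈ Finset.range n, ∀ b ∈ Finset.range n, a ≠ b →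
      Disjoint (Finset.HasAntidiagonal.antidiagonal a) (Finset.HasAntidiagonal.antidiagonal b) := by
    intro a _ b _ hab
    refine Finset.disjoint_left.mpr fun x hxa hxb => hab ?_
    rw [← Finset.HasAntidiagonal.mem_antidiagonal.mp hxa, ← Finset.HasAntidiagonal.mem_antidiagonal.mp hxb]
  rw [hT, Finset.sum_biUnion hdisj]
  have hinner : ∀ m ∈ Finset.range n,
      (∑ kl ∈ Finset.HasAntidiagonal.antidiagonal m,
        ((1:ℂ) ^ kl.1 / ((2:ℂ) ^ kl.1 * (Nat.factorial kl.1 : ℂ))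
          * ((-1:ℂ) ^ kl.2 / ((2:ℂ) ^ kl.2 * (Nat.factorial kl.2 : ℂ))))
            • ((dunklLap θ)^[kl.1 + kl.2] p))
      = if m = 0 then p else 0 := by
    intro m _
    have : ∀ kl ∈ Finset.HasAntidiagonal.antidiagonal m,
        ((1:ℂ) ^ kl.1 / ((2:ℂ) ^ kl.1 * (Nat.factorial kl.1 : ℂ))
          * ((-1:ℂ) ^ kl.2 / ((2:ℂ) ^ kl.2 * (Nat.factorial kl.2 : ℂ))))
            • ((dunklLap θ)^[kl.1 + kl.2] p)
        = ((1:ℂ) ^ kl.1 / ((2:ℂ) ^ kl.1 * (Nat.factorial kl.1 : ℂ))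
          * ((-1:ℂ) ^ kl.2 / ((2:ℂ) ^ kl.2 * (Nat.factorial kl.2 : ℂ))))
            • ((dunklLap θ)^[m] p) := by
      intro kl hkl
      rw [Finset.HasAntidiagonal.mem_antidiagonal.mp hkl]
    rw [Finset.sum_congr rfl this, ← Finset.sum_smul, comp_coeff m]
    rcases eq_or_ne m 0 with rfl | hm
    · rw [if_pos rfl, if_pos rfl, one_smul]
      rfl
    · rw [if_neg hm, if_neg hm, zero_smul]
  rw [Finset.sum_congr rfl hinner, Finset.sum_ite_eq' (Finset.range n) 0 (fun _ => p),
    if_pos (Finset.mem_range.mpr (by omega))]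

end DunklAux

/-- `e^{L/2} x_j e^{-L/2} = x_j + D_{j,N}` as operators on `ℂ[x_1,…,x_N]`,
where `L = ∑_i D_{i,N}²`. -/
theorem exp_dunklLap_conj_mul {N : ℕ} (θ : ℂ) (j : Fin N) (p : MvPolynomial (Fin N) ℂ) :
    expHalfDunklLap θ 1 (X j * expHalfDunklLap θ (-1) p) = X j * p + dunkl θ j p := by
  rw [DunklAux.expHalfDunklLap_X_mul, DunklAux.expHalfDunklLap_comp]
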